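/- Let f : 2^V → ℝ be a symmetric submodular function on a finite set V of cardinality n ≥ 2, let α ∈ ℝ, and let (v_1, …, v_n) be an α-ordering of V with respect to f. Then for every subset X ⊊ V with |X ∩ {v_{n−1}, v_n}| = 1, we have 2·f(X) ≥ min_{x ∈ X} (1 + α)·f({x}) + (1 − α)·f({v_n}). -/
import Mathlib


open Finset

def Submodular {V : Type*} [DecidableEq V] [Fintype V] (f : Finset V → ℝ) : Prop :=
  ∀ X Y : Finset V, f X + f Y ≥ f (X ∪ Y) + f (X ∩ Y)

def prefSet {V : Type*} [DecidableEq V] {n : ℕ} (v : Fin n → V) (i : Fin n) : Finset V :=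
  (Finset.univ.filter (fun k : Fin n => k < i)).image v

def IsAlphaOrdering {V : Type*} [DecidableEq V] {n : ℕ} (α : ℝ)
    (f : Finset V → ℝ) (v : Fin n → V) : Prop :=
  ∀ i j : Fin n, i ≤ j →
    f (insert (v i) (prefSet v i)) + α * f {v i} ≤
      f (insert (v j) (prefSet v i)) + α * f {v j}

set_option maxHeartbeats 1000000

namespace Stmt4Aux

variable {V : Type*} [DecidableEq V] [Fintype V] {n : ℕ}

/-- prefix of the first `j` elements, `j : ℕ`. -/
def pref (v : Fin n → V) (j : ℕ) : Finset V :=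
  (Finset.univ.filter (fun k : Fin n => (k : ℕ) < j)).image v

lemma mem_pref_iff {v : Fin n → V} {x : V} {j : ℕ} :
    x ∈ pref v j ↔ ∃ k : Fin n, (k : ℕ) < j ∧ v k = x := by
  simp [pref]

lemma vmem_pref {v : Fin n → V} (hv : Function.Injective v) {k : Fin n} {j : ℕ} :
    v k ∈ pref v j ↔ (k : ℕ) < j := by
  rw [mem_pref_iff]
  constructor
  · rintro ⟨k', hk', he⟩
    rwa [← hv he]
  · exact fun h => ⟨k, h, rfl⟩

lemma prefSet_eq (v : Fin n → V) (i : Fin n) : prefSet v i = pref v (i : ℕ) := rfl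

lemma pref_zero (v : Fin n → V) : pref v 0 = ∅ := by
  simp [pref]

lemma pref_succ {v : Fin n → V} {j : ℕ} (hj : j < n) :
    pref v (j + 1) = insert (v ⟨j, hj⟩) (pref v j) := by
  ext x
  simp only [mem_pref_iff, mem_insert]
  constructor
  · rintro ⟨k, hk, rfl⟩
    rcases Nat.lt_succ_iff_lt_or_eq.mp hk with h | h
    · exact Or.inr ⟨k, h, rfl⟩
    · exact Or.inl (by congr 1; exact Fin.ext h)
  · rintro (rfl | ⟨k, hk, rfl⟩)
    · exact ⟨⟨j, hj⟩, Nat.lt_succ_self j, rfl⟩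
    · exact ⟨k, Nat.lt_succ_of_lt hk, rfl⟩

lemma pref_mono (v : Fin n → V) {i j : ℕ} (h : i ≤ j) : pref v i ⊆ pref v j := by
  intro x hx
  rw [mem_pref_iff] at hx ⊢
  obtain ⟨k, hk, rfl⟩ := hx
  exact ⟨k, lt_of_lt_of_le hk h, rfl⟩

lemma pref_univ {v : Fin n → V} (hv : Function.Surjective v) : pref v n = Finset.univ := by
  ext x
  simp only [mem_pref_iff, mem_univ, iff_true]
  obtain ⟨k, rfl⟩ := hv x
  exact ⟨k, k.isLt, rfl⟩

lemma ord' {f : Finset V → ℝ} {α : ℝ} {v : Fin n → V} (hord : IsAlphaOrdering α f v)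
    {i j : ℕ} (hi : i < n) (hj : j < n) (hij : i ≤ j) :
    f (pref v (i + 1)) + α * f {v ⟨i, hi⟩} ≤
      f (insert (v ⟨j, hj⟩) (pref v i)) + α * f {v ⟨j, hj⟩} := by
  have h := hord ⟨i, hi⟩ ⟨j, hj⟩ hij
  rwa [prefSet_eq, ← pref_succ hi] at h

/-- The combined two-submodularities-plus-ordering step. -/
lemma step {f : Finset V → ℝ} (hf : Submodular f) {α : ℝ} {v : Fin n → V}
    (hv : Function.Injective v) (hord : IsAlphaOrdering α f v)
    {j₀ j : ℕ} (hj₀ : j₀ < n) (hj : j < n) (hlt : j₀ < j)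
    {X Y : Finset V} (hY : Y ⊆ pref v j₀) (hX : X ⊆ pref v (j₀ + 1)) :
    f (Y ∪ {v ⟨j, hj⟩}) + f (X ∪ (pref v j \ pref v (j₀ + 1))) ≥
      f X + f Y + f (pref v j) - f (pref v j₀)
        + α * f {v ⟨j₀, hj₀⟩} - α * f {v ⟨j, hj⟩} := by
  have hjn : v ⟨j, hj⟩ ∉ pref v j₀ := by
    rw [vmem_pref hv]; simp; omega
  have e1 : (Y ∪ {v ⟨j, hj⟩}) ∪ pref v j₀ = insert (v ⟨j, hj⟩) (pref v j₀) := by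
    ext x
    simp only [mem_union, mem_singleton, mem_insert]
    have h : x ∈ Y → x ∈ pref v j₀ := fun hx => hY hx
    tauto
  have e2 : (Y ∪ {v ⟨j, hj⟩}) ∩ pref v j₀ = Y := by
    ext x
    simp only [mem_inter, mem_union, mem_singleton]
    have h : x ∈ Y → x ∈ pref v j₀ := fun hx => hY hx
    have h2 : x = v ⟨j, hj⟩ → x ∈ pref v j₀ → False := fun he hm => hjn (he ▸ hm)
    tauto
  have e3 : (X ∪ (pref v j \ pref v (j₀ + 1))) ∪ pref v (j₀ + 1) = pref v j := by
    ext x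
    simp only [mem_union, mem_sdiff]
    have h : x ∈ X → x ∈ pref v (j₀ + 1) := fun hx => hX hx
    have h2 : x ∈ pref v (j₀ + 1) → x ∈ pref v j := fun hx => pref_mono v hlt hx
    tauto
  have e4 : (X ∪ (pref v j \ pref v (j₀ + 1))) ∩ pref v (j₀ + 1) = X := by
    ext x
    simp only [mem_inter, mem_union, mem_sdiff]
    have h : x ∈ X → x ∈ pref v (j₀ + 1) := fun hx => hX hx
    tauto
  have hsub1 := hf (Y ∪ {v ⟨j, hj⟩}) (pref v j₀)
  rw [e1, e2] at hsub1
  have hsub2 := hf (X ∪ (pref v j \ pref v (j₀ + 1))) (pref v (j₀ + 1))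
  rw [e3, e4] at hsub2
  have hordx := ord' hord hj₀ hj (le_of_lt hlt)
  linarith

/-- The key inductive claim. -/
lemma keyK {f : Finset V → ℝ} (hf : Submodular f) {α : ℝ} {v : Fin n → V}
    (hvi : Function.Injective v) (hord : IsAlphaOrdering α f v)
    (S : Finset V) {m : ℕ} (hmn : m < n) (hmS : v ⟨m, hmn⟩ ∈ S)
    (hmin : ∀ k : Fin n, (k : ℕ) < m → v k ∉ S) :
    ∀ j : ℕ, ∀ hj : j < n, 1 ≤ j →
      ((v ⟨j, hj⟩ ∈ S) ↔ ¬ (v ⟨j - 1, by omega⟩ ∈ S)) →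
      f (S ∩ pref v (j + 1)) + f (pref v (j + 1) \ S) ≥
        f (pref v j) - α * f {v ⟨j, hj⟩} + (1 + α) * f {v ⟨m, hmn⟩} := by
  classical
  intro j
  induction j using Nat.strong_induction_on with
  | _ j IH =>
  intro hj hj1 hact
  obtain ⟨inS, memIff⟩ : ∃ inS : ℕ → Prop,
      ∀ (i : ℕ) (hi : i < n), inS i ↔ v ⟨i, hi⟩ ∈ S :=
    ⟨fun i => ∃ h : i < n, v ⟨i, h⟩ ∈ S,
      fun i hi => ⟨fun ⟨_, hx⟩ => hx, fun hx => ⟨hi, hx⟩⟩⟩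
  by_cases hAne : ((Finset.range j).filter
      (fun i => 1 ≤ i ∧ (inS i ↔ ¬ inS (i - 1)))).Nonempty
  · -- step case: j₀ is the last switch before j
    obtain ⟨j₀, hj₀j, hj₀1, hact₀, hmaxP⟩ :
        ∃ j₀, j₀ < j ∧ 1 ≤ j₀ ∧ (inS j₀ ↔ ¬ inS (j₀ - 1)) ∧
          ∀ i, i < j → 1 ≤ i → (inS i ↔ ¬ inS (i - 1)) → i ≤ j₀ := by
      set A : Finset ℕ :=
        (Finset.range j).filter (fun i => 1 ≤ i ∧ (inS i ↔ ¬ inS (i - 1))) with hA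
      refine ⟨A.max' hAne, ?_, ?_, ?_, ?_⟩
      · exact mem_range.mp (mem_filter.mp (A.max'_mem hAne)).1
      · exact (mem_filter.mp (A.max'_mem hAne)).2.1
      · exact (mem_filter.mp (A.max'_mem hAne)).2.2
      · exact fun i h1 h2 h3 =>
          A.le_max' i (mem_filter.mpr ⟨mem_range.mpr h1, h2, h3⟩)
    clear hAne
    have hj₀n : j₀ < n := lt_trans hj₀j hj
    have hconst : ∀ i, j₀ ≤ i → i < j → (inS i ↔ inS j₀) := by
      intro i
      induction i with
      | zero => intro h1 _; exact absurd h1 (by omega)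
      | succ i ih =>
        intro h1 h2
        rcases Nat.lt_or_ge j₀ (i + 1) with h | h
        · have hstep : inS (i + 1) ↔ inS i := by
            by_contra hne
            have := hmaxP (i + 1) h2 (by omega) (by tauto)
            omega
          have := ih (by omega) (by omega)
          tauto
        · have he : j₀ = i + 1 := by omega
          rw [he]
    have hactj : inS j ↔ ¬ inS j₀ := by
      have h1 : inS j ↔ ¬ inS (j - 1) := by
        rw [memIff j hj, memIff (j - 1) (by omega)]
        exact hact
      have h2 : inS (j - 1) ↔ inS j₀ := hconst (j - 1) (by omega) (by omega)
      tauto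
    by_cases hc : v ⟨j₀, hj₀n⟩ ∈ S
    · -- side of j₀ is inside S
      have hinSj₀ : inS j₀ := (memIff j₀ hj₀n).mpr hc
      have hjnotS : v ⟨j, hj⟩ ∉ S := by
        intro hx
        exact (hactj.mp ((memIff j hj).mpr hx)) hinSj₀
      have hY : pref v (j₀ + 1) \ S ⊆ pref v j₀ := by
        intro x hx
        rw [mem_sdiff] at hx
        obtain ⟨k, hk, rfl⟩ := mem_pref_iff.mp hx.1
        have hne : (k : ℕ) ≠ j₀ := by
          intro h
          exact hx.2 (by rw [show k = (⟨j₀, hj₀n⟩ : Fin n) from Fin.ext h]; exact hc)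
        exact (vmem_pref hvi).mpr (by omega)
      have hX : S ∩ pref v (j₀ + 1) ⊆ pref v (j₀ + 1) := inter_subset_right
      have hmid : ∀ k : Fin n, j₀ < (k : ℕ) → (k : ℕ) < j → v k ∈ S := by
        intro k h1 h2
        have := (hconst k (by omega) h2).mpr hinSj₀
        exact (memIff k k.isLt).mp this
      have ea : S ∩ pref v (j + 1) =
          (S ∩ pref v (j₀ + 1)) ∪ (pref v j \ pref v (j₀ + 1)) := by
        ext x
        simp only [mem_inter, mem_union, mem_sdiff]
        constructor
        · rintro ⟨hxS, hxp⟩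
          obtain ⟨k, hk, rfl⟩ := mem_pref_iff.mp hxp
          by_cases hk0 : (k : ℕ) < j₀ + 1
          · exact Or.inl ⟨hxS, (vmem_pref hvi).mpr hk0⟩
          · have hkj : (k : ℕ) ≠ j := by
              intro h
              exact hjnotS (by rw [show (⟨j, hj⟩ : Fin n) = k from Fin.ext h.symm]; exact hxS)
            refine Or.inr ⟨(vmem_pref hvi).mpr (by omega), ?_⟩
            rw [vmem_pref hvi]; omega
        · rintro (⟨hxS, hxp⟩ | ⟨hxp, hxnp⟩)
          · exact ⟨hxS, pref_mono v (by omega) hxp⟩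
          · obtain ⟨k, hk, rfl⟩ := mem_pref_iff.mp hxp
            have hknp : ¬ (k : ℕ) < j₀ + 1 := fun h => hxnp ((vmem_pref hvi).mpr h)
            exact ⟨hmid k (by omega) hk, (vmem_pref hvi).mpr (by omega)⟩
      have eb : pref v (j + 1) \ S = (pref v (j₀ + 1) \ S) ∪ {v ⟨j, hj⟩} := by
        ext x
        simp only [mem_sdiff, mem_union, mem_singleton]
        constructor
        · rintro ⟨hxp, hxS⟩
          obtain ⟨k, hk, rfl⟩ := mem_pref_iff.mp hxp
          by_cases hk0 : (k : ℕ) < j₀ + 1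
          · exact Or.inl ⟨(vmem_pref hvi).mpr hk0, hxS⟩
          · by_cases hkj : (k : ℕ) = j
            · exact Or.inr (by rw [show k = (⟨j, hj⟩ : Fin n) from Fin.ext hkj])
            · exact absurd (hmid k (by omega) (by omega)) hxS
        · rintro (⟨hxp, hxS⟩ | rfl)
          · exact ⟨pref_mono v (by omega) hxp, hxS⟩
          · exact ⟨(vmem_pref hvi).mpr (by exact Nat.lt_succ_self j), hjnotS⟩
      have hstep := step hf hvi hord hj₀n hj hj₀j hY hX
      have hIH := IH j₀ hj₀j hj₀n hj₀1 (by
        rw [memIff j₀ hj₀n, memIff (j₀ - 1) (by omega)] at hact₀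
        exact hact₀)
      rw [ea, eb]
      linarith
    · -- side of j₀ is outside S
      have hinSj₀ : ¬ inS j₀ := fun h => hc ((memIff j₀ hj₀n).mp h)
      have hjS : v ⟨j, hj⟩ ∈ S := by
        have := hactj.mpr hinSj₀
        exact (memIff j hj).mp this
      have hY : S ∩ pref v (j₀ + 1) ⊆ pref v j₀ := by
        intro x hx
        rw [mem_inter] at hx
        obtain ⟨k, hk, rfl⟩ := mem_pref_iff.mp hx.2
        have hne : (k : ℕ) ≠ j₀ := by
          intro h
          exact hc (by rw [show (⟨j₀, hj₀n⟩ : Fin n) = k from Fin.ext h.symm]; exact hx.1)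
        exact (vmem_pref hvi).mpr (by omega)
      have hX : pref v (j₀ + 1) \ S ⊆ pref v (j₀ + 1) := sdiff_subset
      have hmid : ∀ k : Fin n, j₀ < (k : ℕ) → (k : ℕ) < j → v k ∉ S := by
        intro k h1 h2 hx
        exact hinSj₀ ((hconst k (by omega) h2).mp ((memIff k k.isLt).mpr hx))
      have ea : S ∩ pref v (j + 1) = (S ∩ pref v (j₀ + 1)) ∪ {v ⟨j, hj⟩} := by
        ext x
        simp only [mem_inter, mem_union, mem_singleton]
        constructor
        · rintro ⟨hxS, hxp⟩
          obtain ⟨k, hk, rfl⟩ := mem_pref_iff.mp hxp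
          by_cases hk0 : (k : ℕ) < j₀ + 1
          · exact Or.inl ⟨hxS, (vmem_pref hvi).mpr hk0⟩
          · by_cases hkj : (k : ℕ) = j
            · exact Or.inr (by rw [show k = (⟨j, hj⟩ : Fin n) from Fin.ext hkj])
            · exact absurd hxS (hmid k (by omega) (by omega))
        · rintro (⟨hxS, hxp⟩ | rfl)
          · exact ⟨hxS, pref_mono v (by omega) hxp⟩
          · exact ⟨hjS, (vmem_pref hvi).mpr (by exact Nat.lt_succ_self j)⟩
      have eb : pref v (j + 1) \ S =
          (pref v (j₀ + 1) \ S) ∪ (pref v j \ pref v (j₀ + 1)) := by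
        ext x
        simp only [mem_sdiff, mem_union]
        constructor
        · rintro ⟨hxp, hxS⟩
          obtain ⟨k, hk, rfl⟩ := mem_pref_iff.mp hxp
          by_cases hk0 : (k : ℕ) < j₀ + 1
          · exact Or.inl ⟨(vmem_pref hvi).mpr hk0, hxS⟩
          · have hkj : (k : ℕ) ≠ j := by
              intro h
              exact hxS (by rw [show k = (⟨j, hj⟩ : Fin n) from Fin.ext h]; exact hjS)
            refine Or.inr ⟨(vmem_pref hvi).mpr (by omega), ?_⟩
            rw [vmem_pref hvi]; omega
        · rintro (⟨hxp, hxS⟩ | ⟨hxp, hxnp⟩)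
          · exact ⟨pref_mono v (by omega) hxp, hxS⟩
          · obtain ⟨k, hk, rfl⟩ := mem_pref_iff.mp hxp
            have hknp : ¬ (k : ℕ) < j₀ + 1 := fun h => hxnp ((vmem_pref hvi).mpr h)
            exact ⟨(vmem_pref hvi).mpr (by omega), hmid k (by omega) hk⟩
      have hstep := step hf hvi hord hj₀n hj hj₀j hY hX
      have hIH := IH j₀ hj₀j hj₀n hj₀1 (by
        rw [memIff j₀ hj₀n, memIff (j₀ - 1) (by omega)] at hact₀
        exact hact₀)
      rw [ea, eb]
      linarith
  · -- base case: no switch before j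
    have hnone : ∀ i, i < j → 1 ≤ i → (inS i ↔ inS (i - 1)) := by
      intro i h1 h2
      by_contra hne
      exact hAne ⟨i, mem_filter.mpr ⟨mem_range.mpr h1, h2, by tauto⟩⟩
    clear hAne
    have hconst : ∀ i, i < j → (inS i ↔ inS 0) := by
      intro i
      induction i with
      | zero => intro _; rfl
      | succ i ih =>
        intro h2
        have hstep := hnone (i + 1) h2 (by omega)
        have := ih (by omega)
        simp only [Nat.add_sub_cancel] at hstep
        tauto
    have hactj : inS j ↔ ¬ inS 0 := by
      have h1 : inS j ↔ ¬ inS (j - 1) := by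
        rw [memIff j hj, memIff (j - 1) (by omega)]
        exact hact
      have h2 : inS (j - 1) ↔ inS 0 := hconst (j - 1) (by omega)
      tauto
    have h0n : 0 < n := by omega
    by_cases hc : v ⟨0, h0n⟩ ∈ S
    · -- prefix is inside S, v_j outside, m = 0
      have hin0 : inS 0 := (memIff 0 h0n).mpr hc
      have hjnotS : v ⟨j, hj⟩ ∉ S := fun hx => (hactj.mp ((memIff j hj).mpr hx)) hin0
      have hm0 : m = 0 := by
        by_contra hne
        exact hmin ⟨0, h0n⟩ (by show (0:ℕ) < m; omega) hc
      have hmeq : (⟨m, hmn⟩ : Fin n) = ⟨0, h0n⟩ := Fin.ext (by show m = 0; omega)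
      have hsubJ : pref v j ⊆ S := by
        intro x hx
        obtain ⟨k, hk, rfl⟩ := mem_pref_iff.mp hx
        exact (memIff k k.isLt).mp ((hconst k hk).mpr hin0)
      have i1 : S ∩ pref v (j + 1) = pref v j := by
        rw [pref_succ hj]
        ext x
        simp only [mem_inter, mem_insert]
        constructor
        · rintro ⟨hxS, (rfl | hx)⟩
          · exact absurd hxS hjnotS
          · exact hx
        · exact fun hx => ⟨hsubJ hx, Or.inr hx⟩
      have i2 : pref v (j + 1) \ S = {v ⟨j, hj⟩} := by
        rw [pref_succ hj]
        ext x
        simp only [mem_sdiff, mem_insert, mem_singleton]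
        constructor
        · rintro ⟨rfl | hx, hxS⟩
          · rfl
          · exact absurd (hsubJ hx) hxS
        · rintro rfl
          exact ⟨Or.inl rfl, hjnotS⟩
      have hordx := ord' hord h0n hj (by omega)
      rw [pref_zero] at hordx
      rw [pref_succ h0n, pref_zero] at hordx
      rw [i1, i2, hmeq]
      have : (insert (v ⟨0, h0n⟩) (∅ : Finset V)) = {v ⟨0, h0n⟩} := rfl
      rw [this] at hordx
      have : (insert (v ⟨j, hj⟩) (∅ : Finset V)) = {v ⟨j, hj⟩} := rfl
      rw [this] at hordx
      linarith
    · -- prefix is outside S, v_j inside, m = j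
      have hin0 : ¬ inS 0 := fun h => hc ((memIff 0 h0n).mp h)
      have hjS : v ⟨j, hj⟩ ∈ S := (memIff j hj).mp (hactj.mpr hin0)
      have hnotJ : ∀ x ∈ pref v j, x ∉ S := by
        intro x hx
        obtain ⟨k, hk, rfl⟩ := mem_pref_iff.mp hx
        intro hxS
        exact hin0 ((hconst k hk).mp ((memIff k k.isLt).mpr hxS))
      have hmj : m = j := by
        rcases Nat.lt_trichotomy m j with h | h | h
        · exact absurd hmS (hnotJ _ ((vmem_pref hvi).mpr (by show (m:ℕ) < j; omega)))
        · exact h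
        · exact absurd hjS (hmin ⟨j, hj⟩ (by show (j:ℕ) < m; omega))
      have hmeq : (⟨m, hmn⟩ : Fin n) = ⟨j, hj⟩ := Fin.ext (by show m = j; omega)
      have i1 : S ∩ pref v (j + 1) = {v ⟨j, hj⟩} := by
        rw [pref_succ hj]
        ext x
        simp only [mem_inter, mem_insert, mem_singleton]
        constructor
        · rintro ⟨hxS, (rfl | hx)⟩
          · rfl
          · exact absurd hxS (hnotJ _ hx)
        · rintro rfl
          exact ⟨hjS, Or.inl rfl⟩
      have i2 : pref v (j + 1) \ S = pref v j := by
        rw [pref_succ hj]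
        ext x
        simp only [mem_sdiff, mem_insert]
        constructor
        · rintro ⟨rfl | hx, hxS⟩
          · exact absurd hjS hxS
          · exact hx
        · exact fun hx => ⟨Or.inr hx, hnotJ _ hx⟩
      rw [i1, i2, hmeq]
      linarith

end Stmt4Aux

/-- Theorem 5.3: for a symmetric submodular `f` and an `α`-ordering `(v_1, …, v_n)` of `V`,
every `X ⊊ V` with `|X ∩ {v_{n-1}, v_n}| = 1` satisfies
`2 f(X) ≥ min_{x ∈ X} (1+α) f({x}) + (1-α) f({v_n})`. -/
theorem stmt_4 {n : ℕ} (hn : 2 ≤ n) {V : Type*} [DecidableEq V] [Fintype V]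
    (f : Finset V → ℝ) (hsym : ∀ X : Finset V, f X = f Xᶜ) (hf : Submodular f)
    (α : ℝ) (v : Fin n → V) (hv : Function.Bijective v)
    (hord : IsAlphaOrdering α f v)
    (X : Finset V) (hX : X ⊂ Finset.univ)
    (hcap : (X ∩ ({v ⟨n - 2, by omega⟩, v ⟨n - 1, by omega⟩} : Finset V)).card = 1)
    (hXne : X.Nonempty) :
    2 * f X ≥
      X.inf' hXne (fun x => (1 + α) * f {x}) + (1 - α) * f {v ⟨n - 1, by omega⟩} := by
  classical
  open Stmt4Aux in
  obtain ⟨hvi, hvs⟩ := hv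
  have hn1 : n - 1 < n := by omega
  have hn2 : n - 2 < n := by omega
  -- exactly one of the last two is in X
  have hxor : (v ⟨n - 1, hn1⟩ ∈ X) ↔ ¬ (v ⟨n - 2, hn2⟩ ∈ X) := by
    have hab : v ⟨n - 2, hn2⟩ ≠ v ⟨n - 1, hn1⟩ := by
      intro h
      have := hvi h
      rw [Fin.mk.injEq] at this
      omega
    by_cases ha : v ⟨n - 2, hn2⟩ ∈ X <;> by_cases hb : v ⟨n - 1, hn1⟩ ∈ X
    · exfalso
      have hsub : ({v ⟨n - 2, hn2⟩, v ⟨n - 1, hn1⟩} : Finset V) ⊆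
          X ∩ ({v ⟨n - 2, hn2⟩, v ⟨n - 1, hn1⟩} : Finset V) := by
        intro x hx
        rw [Finset.mem_insert, Finset.mem_singleton] at hx
        rcases hx with rfl | rfl <;> simp [ha, hb]
      have h2 := Finset.card_le_card hsub
      rw [Finset.card_insert_of_notMem (by simpa using hab), Finset.card_singleton] at h2
      omega
    · tauto
    · tauto
    · exfalso
      have he : X ∩ ({v ⟨n - 2, hn2⟩, v ⟨n - 1, hn1⟩} : Finset V) = ∅ := by
        ext x
        simp only [Finset.mem_inter, Finset.mem_insert, Finset.mem_singleton,
          Finset.notMem_empty, iff_false, not_and]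
        rintro hx (rfl | rfl) <;> tauto
      rw [he] at hcap
      simp at hcap
  -- minimal index of X
  obtain ⟨mF, hmS, hmin⟩ : ∃ mF : Fin n, v mF ∈ X ∧ ∀ k : Fin n, (k : ℕ) < (mF : ℕ) → v k ∉ X := by
    set I : Finset (Fin n) := Finset.univ.filter (fun k => v k ∈ X) with hI
    have hIne : I.Nonempty := by
      obtain ⟨x, hx⟩ := hXne
      obtain ⟨k, rfl⟩ := hvs x
      exact ⟨k, Finset.mem_filter.mpr ⟨Finset.mem_univ _, hx⟩⟩
    refine ⟨I.min' hIne, (Finset.mem_filter.mp (I.min'_mem hIne)).2, ?_⟩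
    intro k hk hkX
    have := I.min'_le k (Finset.mem_filter.mpr ⟨Finset.mem_univ _, hkX⟩)
    rw [Fin.le_def] at this
    omega
  have hK := Stmt4Aux.keyK hf hvi hord X (mF.isLt) (by
      simpa using hmS) hmin (n - 1) hn1 (by omega) (by
      have he : (⟨n - 1 - 1, by omega⟩ : Fin n) = ⟨n - 2, hn2⟩ := Fin.ext (by show n - 1 - 1 = n - 2; omega)
      rw [he]
      exact hxor)
  -- rewrite the conclusion of hK
  have hsum : n - 1 + 1 = n := by omega
  rw [hsum, Stmt4Aux.pref_univ hvs, Finset.inter_univ, ← Finset.compl_eq_univ_sdiff] at hK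
  have hXc : f Xᶜ = f X := (hsym X).symm
  have hprefc : f (Stmt4Aux.pref v (n - 1)) = f {v ⟨n - 1, hn1⟩} := by
    have hcomp : (Stmt4Aux.pref v (n - 1))ᶜ = {v ⟨n - 1, hn1⟩} := by
      ext x
      obtain ⟨k, rfl⟩ := hvs x
      rw [Finset.mem_compl, Stmt4Aux.vmem_pref hvi, Finset.mem_singleton]
      constructor
      · intro h
        have : (k : ℕ) = n - 1 := by omega
        rw [show k = (⟨n - 1, hn1⟩ : Fin n) from Fin.ext this]
      · intro h
        have := hvi h
        rw [this]
        show ¬ (n - 1 : ℕ) < n - 1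
        omega
    rw [hsym (Stmt4Aux.pref v (n - 1)), hcomp]
  have hinf : X.inf' hXne (fun x => (1 + α) * f {x}) ≤ (1 + α) * f {v mF} :=
    Finset.inf'_le _ hmS
  have hmeq : (⟨(mF : ℕ), mF.isLt⟩ : Fin n) = mF := rfl
  rw [hmeq] at hK
  rw [hXc, hprefc] at hK
  linarith
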